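/- arXiv:1311.2194 — 3 statements merged into one kernel-verified Lean document; each statement's English description precedes it below -/
import Mathlib

section
/- For every complex number z not a multiple of 2π, the series identity 1/z + Σ_{k≥1} 2z/(z² - (2kπ)²) = 1/(2 tan(z/2)) holds. -/
/-!
Substituting `x = z / (2π)` into the Mittag-Leffler expansion
`π cot (πx) = 1/x + Σ_{n ≥ 1} (1/(x - n) + 1/(x + n))` turns it into the identity, once the two
terms for `±n` are combined into `2x / (x² - n²)` and `1/tan` is written as `cot`.
-/

open Complex

lemma cotTerm_eq_two_mul_div_sq_sub_sq {x : ℂ} (hx : x ∈ integerComplement) (n : ℕ) :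
    cotTerm x n = 2 * x / (x ^ 2 - ((n : ℂ) + 1) ^ 2) := by
  rw [cotTerm_identity hx, show (x + (n + 1)) * (x - (n + 1)) = x ^ 2 - ((n : ℂ) + 1) ^ 2 by ring]
  ring

theorem one_div_add_tsum_eq_pi_div_mul_cot {p z : ℂ} (hp : p ≠ 0)
    (hz : z / p ∈ integerComplement) :
    1 / z + ∑' k : ℕ, 2 * z / (z ^ 2 - (((k : ℂ) + 1) * p) ^ 2)
      = Real.pi / p * cot (Real.pi * (z / p)) := by
  set x := z / p
  have hzx : z = p * x := (mul_div_cancel₀ z hp).symm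
  have hterm (k : ℕ) : 2 * z / (z ^ 2 - (((k : ℂ) + 1) * p) ^ 2) = p⁻¹ * cotTerm x k := by
    rw [cotTerm_eq_two_mul_div_sq_sub_sq hz, hzx,
      show (p * x) ^ 2 - (((k : ℂ) + 1) * p) ^ 2 = p ^ 2 * (x ^ 2 - ((k : ℂ) + 1) ^ 2) by ring]
    field_simp
  rw [tsum_congr hterm, tsum_mul_left, ← cot_series_rep' hz, hzx]
  have hx : x ≠ 0 := integerComplement.ne_zero hz
  field_simp
  ring

/-- For every complex number `z` not an integer multiple of `2π`, the partial-fraction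
identity `1/z + Σ_{k≥1} 2z/(z² - (2kπ)²) = 1/(2 tan(z/2))` holds. -/
theorem stmt0 (z : ℂ) (hz : ∀ k : ℤ, z ≠ 2 * (Real.pi : ℂ) * (k : ℂ)) :
    1 / z + ∑' k : ℕ, 2 * z / (z ^ 2 - (2 * ((k : ℂ) + 1) * (Real.pi : ℂ)) ^ 2)
      = 1 / (2 * Complex.tan (z / 2)) := by
  have h2π : 2 * (Real.pi : ℂ) ≠ 0 := mul_ne_zero two_ne_zero (ofReal_ne_zero.mpr Real.pi_ne_zero)
  have hmem : z / (2 * Real.pi) ∈ integerComplement := by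
    rintro ⟨k, hk⟩
    exact hz k (by rw [hk]; field_simp)
  calc 1 / z + ∑' k : ℕ, 2 * z / (z ^ 2 - (2 * ((k : ℂ) + 1) * (Real.pi : ℂ)) ^ 2)
      = 1 / z + ∑' k : ℕ, 2 * z / (z ^ 2 - (((k : ℂ) + 1) * (2 * Real.pi)) ^ 2) := by
        simp only [mul_comm, mul_left_comm]
    _ = Real.pi / (2 * Real.pi) * cot (Real.pi * (z / (2 * Real.pi))) :=
        one_div_add_tsum_eq_pi_div_mul_cot h2π hmem
    _ = 1 / (2 * Complex.tan (z / 2)) := by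
        rw [← cot_inv_eq_tan]
        field_simp
end

section
/- Let f ∈ H¹(ℝ) ∩ L^∞(ℝ) and h₂ > 0 with h₂ + f(β) ≥ c > 0 for all β. Define w(x) = P.V. ∫_ℝ ∂_β f(β) (h₂ + f(β)) / ((x-β)² + (h₂ + f(β))²) dβ. Then w ∈ L²(ℝ) with ‖w‖_{L²} ≤ C (1/c² + 1)(1 + ‖f‖_{L^∞})‖∂_x f‖_{L²} for a universal constant C. -/
/-!
Writing `a(β) = h₂ + f(β) ∈ [c, h₂ + M]`, the amplitude is `∫ f'(β) P_{a(β)}(x - β) dβ` with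
`P_r(t) = r / (t² + r²)` the half-plane Poisson kernel. Uniformly in `β`, the kernel `P_{a(β)}` is
dominated by the fixed integrable function `Φ = (2 + 2M/c) P_c + P_{h₂}`: for `|t| ≤ c` by
`2 P_c(t)`, and for `|t| > c` the difference `P_a(t) - P_{h₂}(t)` is at most
`2 |a - h₂| / (t² + c²)`. Hence `|w| ≤ |f'| ⋆ Φ`, and Young's inequality
`‖F ⋆ Φ‖₂ ≤ ‖Φ‖₁ ‖F‖₂` with `‖Φ‖₁ = π (3 + 2M/c)` gives the bound.
-/

open MeasureTheory Real
open scoped ENNReal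

/-- Unnormalised: its integral is `π`, not `1`. -/
noncomputable def halfPlanePoissonKernel (r t : ℝ) : ℝ := r / (t ^ 2 + r ^ 2)

section HalfPlanePoissonKernel

variable {a c h r M t : ℝ}

theorem halfPlanePoissonKernel_nonneg (hr : 0 ≤ r) (t : ℝ) : 0 ≤ halfPlanePoissonKernel r t := by
  unfold halfPlanePoissonKernel; positivity

theorem measurable_halfPlanePoissonKernel (r : ℝ) : Measurable (halfPlanePoissonKernel r) := by
  unfold halfPlanePoissonKernel; fun_prop

theorem halfPlanePoissonKernel_eq_inv_mul (hr : r ≠ 0) (t : ℝ) :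
    halfPlanePoissonKernel r t = r⁻¹ * (1 + (t / r) ^ 2)⁻¹ := by
  unfold halfPlanePoissonKernel; field_simp; ring

theorem integrable_halfPlanePoissonKernel (hr : 0 < r) : Integrable (halfPlanePoissonKernel r) := by
  simp_rw [funext (halfPlanePoissonKernel_eq_inv_mul hr.ne')]
  exact (integrable_inv_one_add_sq.comp_div hr.ne').const_mul _

theorem integral_halfPlanePoissonKernel (hr : 0 < r) : ∫ t, halfPlanePoissonKernel r t = π := by
  simp_rw [halfPlanePoissonKernel_eq_inv_mul hr.ne', integral_const_mul,
    Measure.integral_comp_div (fun y : ℝ => (1 + y ^ 2)⁻¹) r, integral_univ_inv_one_add_sq,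
    abs_of_pos hr, smul_eq_mul]
  field_simp

theorem halfPlanePoissonKernel_le_two_mul_of_sq_le (hc : 0 < c) (hca : c ≤ a) (ht : t ^ 2 ≤ c ^ 2) :
    halfPlanePoissonKernel a t ≤ 2 * halfPlanePoissonKernel c t := by
  have ha : 0 < a := hc.trans_le hca
  unfold halfPlanePoissonKernel
  rw [← mul_div_assoc, div_le_div_iff₀ (by positivity) (by positivity)]
  nlinarith [sq_nonneg t, sq_nonneg (a - c), mul_pos ha hc]

theorem halfPlanePoissonKernel_sub_le_of_sq_lt (ha : 0 < a) (hh : 0 < h) (ht : c ^ 2 < t ^ 2) :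
    halfPlanePoissonKernel a t - halfPlanePoissonKernel h t ≤ 2 * |a - h| / (t ^ 2 + c ^ 2) := by
  have hah : 0 < a * h := mul_pos ha hh
  have hc2 : c ^ 2 + t ^ 2 ≤ 2 * (t ^ 2 + a * h) := by nlinarith
  have hnum : (a - h) * (t ^ 2 - a * h) ≤ |a - h| * (t ^ 2 + a * h) := by
    calc (a - h) * (t ^ 2 - a * h) ≤ |a - h| * |t ^ 2 - a * h| := by
          rw [← abs_mul]; exact le_abs_self _
      _ ≤ |a - h| * (t ^ 2 + a * h) := by
          gcongr; exact abs_le.2 ⟨by nlinarith, by nlinarith⟩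
  -- Cauchy–Schwarz: `(t ^ 2 + a h) ^ 2 ≤ (t ^ 2 + a ^ 2) (t ^ 2 + h ^ 2)`
  have hden : (t ^ 2 + a * h) ^ 2 ≤ (t ^ 2 + a ^ 2) * (t ^ 2 + h ^ 2) := by
    nlinarith [sq_nonneg (t * (a - h))]
  have hdiff : halfPlanePoissonKernel a t - halfPlanePoissonKernel h t
      = (a - h) * (t ^ 2 - a * h) / ((t ^ 2 + a ^ 2) * (t ^ 2 + h ^ 2)) := by
    unfold halfPlanePoissonKernel; field_simp; ring
  have hD : 0 < t ^ 2 + c ^ 2 := by nlinarith [sq_nonneg c]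
  rw [hdiff, div_le_div_iff₀ (by positivity) hD]
  calc (a - h) * (t ^ 2 - a * h) * (t ^ 2 + c ^ 2)
      ≤ |a - h| * (t ^ 2 + a * h) * (2 * (t ^ 2 + a * h)) := by
        gcongr
        linarith
    _ = 2 * |a - h| * (t ^ 2 + a * h) ^ 2 := by ring
    _ ≤ 2 * |a - h| * ((t ^ 2 + a ^ 2) * (t ^ 2 + h ^ 2)) := by gcongr

theorem halfPlanePoissonKernel_le_of_abs_sub_le (hh : 0 < h) (hc : 0 < c) (hca : c ≤ a)
    (hM : |a - h| ≤ M) :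
    halfPlanePoissonKernel a t
      ≤ (2 + 2 * M / c) * halfPlanePoissonKernel c t + halfPlanePoissonKernel h t := by
  have hM0 : 0 ≤ M := (abs_nonneg _).trans hM
  have hPc := halfPlanePoissonKernel_nonneg hc.le t
  have hPh := halfPlanePoissonKernel_nonneg hh.le t
  rcases le_or_gt (t ^ 2) (c ^ 2) with ht | ht
  · have : 0 ≤ 2 * M / c * halfPlanePoissonKernel c t := by positivity
    linarith [halfPlanePoissonKernel_le_two_mul_of_sq_le hc hca ht]
  · have hfar : 2 * |a - h| / (t ^ 2 + c ^ 2) ≤ 2 * M / c * halfPlanePoissonKernel c t := by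
      have hrw : 2 * M / c * halfPlanePoissonKernel c t = 2 * M / (t ^ 2 + c ^ 2) := by
        unfold halfPlanePoissonKernel; field_simp
      rw [hrw]
      gcongr
    linarith [halfPlanePoissonKernel_sub_le_of_sq_lt (hc.trans_le hca) hh ht]

end HalfPlanePoissonKernel

section Young

variable {G : Type*} [MeasurableSpace G] [AddGroup G] [MeasurableAdd G] [MeasurableNeg G]
  {μ : Measure G} [μ.IsAddLeftInvariant] [μ.IsNegInvariant]

theorem lintegral_comp_neg_add_eq_self (K : G → ℝ≥0∞) (x : G) :
    ∫⁻ y, K (-y + x) ∂μ = ∫⁻ y, K y ∂μ := by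
  simpa [neg_add_rev] using
    (lintegral_add_left_eq_self (μ := μ) (fun y => K (-y)) (-x)).trans (lintegral_neg_eq_self K)

theorem lconvolution_rpow_le {F K : G → ℝ≥0∞} (hF : Measurable F) (hK : Measurable K)
    {p : ℝ} (hp : 1 ≤ p) (x : G) :
    (F ⋆ₗ[μ] K) x ^ p ≤ (∫⁻ y, F y ^ p * K (-y + x) ∂μ) * (∫⁻ y, K y ∂μ) ^ (p - 1) := by
  have hp0 : 0 < p := by linarith
  have hKx : Measurable fun y => K (-y + x) := hK.comp (measurable_neg.add_const x)
  have hq : 0 ≤ 1 - 1 / p := by rw [sub_nonneg]; exact div_le_one_of_le₀ hp hp0.le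
  -- Hölder with exponents `1 / p`, `1 - 1 / p` after splitting `K = K ^ (1 / p) K ^ (1 - 1 / p)`
  have hsplit : ∀ y, F y * K (-y + x) =
      (F y ^ p * K (-y + x)) ^ (1 / p) * K (-y + x) ^ (1 - 1 / p) := by
    intro y
    rw [ENNReal.mul_rpow_of_nonneg _ _ (by positivity), ← ENNReal.rpow_mul,
      mul_one_div_cancel hp0.ne', ENNReal.rpow_one, mul_assoc,
      ← ENNReal.rpow_add_of_nonneg _ _ (by positivity) hq, add_sub_cancel, ENNReal.rpow_one]
  have holder := ENNReal.lintegral_mul_norm_pow_le (μ := μ)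
    ((hF.pow_const p).mul hKx).aemeasurable hKx.aemeasurable (p := 1 / p) (q := 1 - 1 / p)
    (by positivity) hq (by ring)
  rw [lintegral_comp_neg_add_eq_self] at holder
  calc (F ⋆ₗ[μ] K) x ^ p
      ≤ ((∫⁻ y, F y ^ p * K (-y + x) ∂μ) ^ (1 / p) * (∫⁻ y, K y ∂μ) ^ (1 - 1 / p)) ^ p := by
        rw [lconvolution_def]
        simp_rw [hsplit]
        exact ENNReal.rpow_le_rpow holder hp0.le
    _ = (∫⁻ y, F y ^ p * K (-y + x) ∂μ) * (∫⁻ y, K y ∂μ) ^ (p - 1) := by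
        rw [ENNReal.mul_rpow_of_nonneg _ _ hp0.le, ← ENNReal.rpow_mul, ← ENNReal.rpow_mul,
          one_div_mul_cancel hp0.ne', ENNReal.rpow_one, sub_mul, one_mul,
          one_div_mul_cancel hp0.ne']

variable [MeasurableAdd₂ G] [SFinite μ]

theorem lintegral_lconvolution_rpow_le {F K : G → ℝ≥0∞} (hF : Measurable F) (hK : Measurable K)
    {p : ℝ} (hp : 1 ≤ p) :
    ∫⁻ x, (F ⋆ₗ[μ] K) x ^ p ∂μ ≤ (∫⁻ y, K y ∂μ) ^ p * ∫⁻ y, F y ^ p ∂μ := by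
  have hFK : Measurable fun q : G × G => F q.2 ^ p * K (-q.2 + q.1) :=
    ((hF.comp measurable_snd).pow_const p).mul (hK.comp (measurable_snd.neg.add measurable_fst))
  calc ∫⁻ x, (F ⋆ₗ[μ] K) x ^ p ∂μ
      ≤ ∫⁻ x, (∫⁻ y, F y ^ p * K (-y + x) ∂μ) * (∫⁻ y, K y ∂μ) ^ (p - 1) ∂μ :=
        lintegral_mono fun x => lconvolution_rpow_le hF hK hp x
    _ = (∫⁻ y, F y ^ p * ∫⁻ x, K (-y + x) ∂μ ∂μ) * (∫⁻ y, K y ∂μ) ^ (p - 1) := by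
        rw [lintegral_mul_const _ hFK.lintegral_prod_right',
          lintegral_lintegral_swap (f := fun x y => F y ^ p * K (-y + x)) hFK.aemeasurable]
        congr 1
        exact lintegral_congr fun y =>
          lintegral_const_mul _ (hK.comp (measurable_const.neg.add measurable_id))
    _ = (∫⁻ y, K y ∂μ) ^ p * ∫⁻ y, F y ^ p ∂μ := by
        simp_rw [lintegral_add_left_eq_self]
        rw [lintegral_mul_const _ (hF.pow_const p), mul_assoc, mul_comm]
        congr 1
        conv_rhs => rw [← add_sub_cancel 1 p, ENNReal.rpow_add_of_nonneg _ _ zero_le_one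
          (sub_nonneg.2 hp), ENNReal.rpow_one]

theorem eLpNorm_lconvolution_le {F K : G → ℝ≥0∞} (hF : Measurable F) (hK : Measurable K)
    {p : ℝ≥0∞} (hp : 1 ≤ p) (hp_top : p ≠ ∞) :
    eLpNorm (F ⋆ₗ[μ] K) p μ ≤ (∫⁻ y, K y ∂μ) * eLpNorm F p μ := by
  have hp0 : p ≠ 0 := (zero_lt_one.trans_le hp).ne'
  have hq : 1 ≤ p.toReal := by
    simpa using ENNReal.toReal_mono hp_top hp
  have hq0 : 0 < p.toReal := zero_lt_one.trans_le hq
  simp only [eLpNorm_eq_lintegral_rpow_enorm_toReal hp0 hp_top, enorm_eq_self]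
  calc (∫⁻ x, (F ⋆ₗ[μ] K) x ^ p.toReal ∂μ) ^ (1 / p.toReal)
      ≤ ((∫⁻ y, K y ∂μ) ^ p.toReal * ∫⁻ y, F y ^ p.toReal ∂μ) ^ (1 / p.toReal) :=
        ENNReal.rpow_le_rpow (lintegral_lconvolution_rpow_le hF hK hq) (by positivity)
    _ = (∫⁻ y, K y ∂μ) * (∫⁻ y, F y ^ p.toReal ∂μ) ^ (1 / p.toReal) := by
        rw [ENNReal.mul_rpow_of_nonneg _ _ (by positivity), ← ENNReal.rpow_mul,
          mul_one_div_cancel hq0.ne', ENNReal.rpow_one]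

end Young

section VorticityAmplitude

variable {g a : ℝ → ℝ} {c h M : ℝ}

theorem eLpNorm_integral_mul_halfPlanePoissonKernel_le (hg : Measurable g) (hh : 0 < h)
    (hc : 0 < c) (hca : ∀ β, c ≤ a β) (haM : ∀ β, |a β - h| ≤ M) {p : ℝ≥0∞} (hp : 1 ≤ p)
    (hp_top : p ≠ ∞) :
    eLpNorm (fun x => ∫ β, g β * halfPlanePoissonKernel (a β) (x - β)) p volume
      ≤ ENNReal.ofReal (π * (3 + 2 * M / c)) * eLpNorm g p volume := by
  have hM0 : 0 ≤ M := (abs_nonneg _).trans (haM 0)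
  set Φ : ℝ → ℝ := fun t => (2 + 2 * M / c) * halfPlanePoissonKernel c t +
    halfPlanePoissonKernel h t
  have hΦ_nonneg : ∀ t, 0 ≤ Φ t := fun t => by
    have := halfPlanePoissonKernel_nonneg hc.le t
    have := halfPlanePoissonKernel_nonneg hh.le t
    positivity
  have hΦ_int : Integrable Φ :=
    ((integrable_halfPlanePoissonKernel hc).const_mul _).add (integrable_halfPlanePoissonKernel hh)
  have hΦ_integral : ∫ t, Φ t = π * (3 + 2 * M / c) := by
    rw [integral_add ((integrable_halfPlanePoissonKernel hc).const_mul _)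
      (integrable_halfPlanePoissonKernel hh), integral_const_mul,
      integral_halfPlanePoissonKernel hc, integral_halfPlanePoissonKernel hh]
    ring
  have hΦ_meas : Measurable Φ :=
    (measurable_const.mul (measurable_halfPlanePoissonKernel c)).add
      (measurable_halfPlanePoissonKernel h)
  have hdom : ∀ x, ‖∫ β, g β * halfPlanePoissonKernel (a β) (x - β)‖ₑ
      ≤ ((fun β => ‖g β‖ₑ) ⋆ₗ fun t => ENNReal.ofReal (Φ t)) x := fun x => by
    refine (enorm_integral_le_lintegral_enorm _).trans (lintegral_mono fun β => ?_)
    rw [enorm_mul, neg_add_eq_sub, Real.enorm_eq_ofReal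
      (halfPlanePoissonKernel_nonneg (hc.le.trans (hca β)) _)]
    gcongr
    exact ENNReal.ofReal_le_ofReal
      (halfPlanePoissonKernel_le_of_abs_sub_le hh hc (hca β) (haM β))
  calc eLpNorm (fun x => ∫ β, g β * halfPlanePoissonKernel (a β) (x - β)) p volume
      ≤ eLpNorm ((fun β => ‖g β‖ₑ) ⋆ₗ fun t => ENNReal.ofReal (Φ t)) p volume :=
        eLpNorm_mono_enorm fun x => by simpa only [enorm_eq_self] using hdom x
    _ ≤ (∫⁻ t, ENNReal.ofReal (Φ t)) * eLpNorm (fun β => ‖g β‖ₑ) p volume :=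
        eLpNorm_lconvolution_le hg.enorm (ENNReal.measurable_ofReal.comp hΦ_meas) hp hp_top
    _ = ENNReal.ofReal (π * (3 + 2 * M / c)) * eLpNorm g p volume := by
        rw [← ofReal_integral_eq_lintegral_ofReal hΦ_int (Filter.Eventually.of_forall hΦ_nonneg),
          hΦ_integral, eLpNorm_enorm]

theorem aestronglyMeasurable_integral_mul_halfPlanePoissonKernel (hg : Measurable g)
    (ha : Measurable a) :
    AEStronglyMeasurable (fun x => ∫ β, g β * halfPlanePoissonKernel (a β) (x - β)) volume := by
  have hmeas : Measurable fun q : ℝ × ℝ => g q.2 * halfPlanePoissonKernel (a q.2) (q.1 - q.2) := by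
    unfold halfPlanePoissonKernel
    fun_prop
  exact hmeas.stronglyMeasurable.integral_prod_right'.aestronglyMeasurable

theorem three_add_two_mul_div_le (hM : 0 ≤ M) :
    3 + 2 * M / c ≤ 3 * (1 / c ^ 2 + 1) * (1 + M) := by
  have hMc : 2 * M / c = 2 * M * (1 / c) := by ring
  have hc2 : 1 / c ^ 2 = (1 / c) ^ 2 := by ring
  rw [hMc, hc2]
  nlinarith [sq_nonneg (1 / c - 1), mul_nonneg hM (sq_nonneg (1 / c - 1)), sq_nonneg (1 / c)]

end VorticityAmplitude

/-- L² bound for the second vorticity amplitude: if `f ∈ H¹(ℝ) ∩ L^∞(ℝ)` and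
`h₂ + f ≥ c > 0`, then `w(x) = ∫ ∂f(β)(h₂+f(β))/((x-β)² + (h₂+f(β))²) dβ` belongs to
`L²(ℝ)` with `‖w‖_{L²} ≤ C (1/c² + 1)(1 + ‖f‖_∞)‖∂f‖_{L²}` for a universal constant. -/
theorem stmt6 : ∃ C : ℝ, 0 < C ∧ ∀ (f : ℝ → ℝ) (h₂ c M : ℝ),
    Differentiable ℝ f → MemLp f 2 volume → MemLp (deriv f) 2 volume →
    (∀ x, |f x| ≤ M) → 0 < h₂ → 0 < c → (∀ β, c ≤ h₂ + f β) →
    MemLp (fun x => ∫ β : ℝ,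
        deriv f β * (h₂ + f β) / ((x - β) ^ 2 + (h₂ + f β) ^ 2)) 2 volume ∧
    (eLpNorm (fun x => ∫ β : ℝ,
        deriv f β * (h₂ + f β) / ((x - β) ^ 2 + (h₂ + f β) ^ 2)) 2 volume).toReal
      ≤ C * (1 / c ^ 2 + 1) * (1 + M) * (eLpNorm (deriv f) 2 volume).toReal := by
  refine ⟨3 * π, by positivity, fun f h₂ c M hf _ hf' hM hh₂ hc hcf => ?_⟩
  have hM0 : 0 ≤ M := (abs_nonneg _).trans (hM 0)
  simp only [mul_div_assoc]
  change MemLp (fun x => ∫ β, deriv f β * halfPlanePoissonKernel (h₂ + f β) (x - β)) 2 volume ∧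
    (eLpNorm (fun x => ∫ β, deriv f β * halfPlanePoissonKernel (h₂ + f β) (x - β)) 2 volume).toReal
      ≤ _
  have hbound := eLpNorm_integral_mul_halfPlanePoissonKernel_le (measurable_deriv f) hh₂ hc hcf
    (fun β => by simpa using hM β) one_le_two ENNReal.ofNat_ne_top
  refine ⟨⟨aestronglyMeasurable_integral_mul_halfPlanePoissonKernel (measurable_deriv f)
      (measurable_const.add hf.continuous.measurable),
    hbound.trans_lt (ENNReal.mul_lt_top ENNReal.ofReal_lt_top hf'.2)⟩, ?_⟩
  calc _ ≤ π * (3 + 2 * M / c) * (eLpNorm (deriv f) 2 volume).toReal := by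
        simpa [ENNReal.toReal_mul, ENNReal.toReal_ofReal (by positivity : 0 ≤ π * (3 + 2 * M / c))]
          using ENNReal.toReal_mono (ENNReal.mul_ne_top ENNReal.ofReal_ne_top hf'.2.ne) hbound
    _ ≤ π * (3 * (1 / c ^ 2 + 1) * (1 + M)) * (eLpNorm (deriv f) 2 volume).toReal := by
        gcongr
        exact three_add_two_mul_div_le hM0
    _ = 3 * π * (1 / c ^ 2 + 1) * (1 + M) * (eLpNorm (deriv f) 2 volume).toReal := by ring
end

section
/- For any b > 2 and h₂ > 0, define z₂ on [(π/b + π)/3, π/2] by z₂(α) = (-h₂/2)/(π/2 - π/b) · (α - π/b) and z₁(α) = α - sin(α). Then the integral I_b = ∫_{(π/b+π)/3}^{π/2} (1-cos β) sin(z₁(β)) sinh(z₂(β)) / ((cosh(z₂(β)) - cos(z₁(β)))²) dβ satisfies I_b ≤ -c_b sinh(h₂/3)/((cosh(h₂/2) + 1)²) for some constant c_b > 0 depending only on b. -/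
set_option maxHeartbeats 1000000

open Real Set

private lemma stmt12_mono : Monotone (fun x : ℝ => x - Real.sin x) := by
  have hd : ∀ x : ℝ, deriv (fun x : ℝ => x - Real.sin x) x = 1 - Real.cos x := by
    intro x
    rw [deriv_fun_sub differentiableAt_fun_id (Real.differentiable_sin x)]
    simp
  apply monotone_of_deriv_nonneg
  · exact differentiable_id.sub Real.differentiable_sin
  · intro x
    rw [hd x]
    have := Real.cos_le_one x
    linarith

/-- On `[(π/b+π)/3, π/2]` with `z₂(α) = (-h₂/2)/(π/2-π/b)·(α-π/b)` and
`z₁(α) = α - sin α`, the integral `I_b` satisfies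
`I_b ≤ -c_b sinh(h₂/3)/(cosh(h₂/2)+1)²` for a constant `c_b > 0` depending only on `b`;
in particular `|I_b| ≥ c_b sinh(h₂/3)/(cosh(h₂/2)+1)²`. -/
theorem stmt12 (b : ℝ) (hb : 2 < b) :
    ∃ c_b : ℝ, 0 < c_b ∧ ∀ h₂ : ℝ, 0 < h₂ →
      (∫ β in ((Real.pi / b + Real.pi) / 3)..(Real.pi / 2),
          (1 - Real.cos β) * Real.sin (β - Real.sin β) *
            Real.sinh ((-h₂ / 2) / (Real.pi / 2 - Real.pi / b) * (β - Real.pi / b)) /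
            ((Real.cosh ((-h₂ / 2) / (Real.pi / 2 - Real.pi / b) * (β - Real.pi / b))
              - Real.cos (β - Real.sin β)) ^ 2))
        ≤ -c_b * Real.sinh (h₂ / 3) / ((Real.cosh (h₂ / 2) + 1) ^ 2) ∧
      c_b * Real.sinh (h₂ / 3) / ((Real.cosh (h₂ / 2) + 1) ^ 2) ≤
        |∫ β in ((Real.pi / b + Real.pi) / 3)..(Real.pi / 2),
          (1 - Real.cos β) * Real.sin (β - Real.sin β) *
            Real.sinh ((-h₂ / 2) / (Real.pi / 2 - Real.pi / b) * (β - Real.pi / b)) /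
            ((Real.cosh ((-h₂ / 2) / (Real.pi / 2 - Real.pi / b) * (β - Real.pi / b))
              - Real.cos (β - Real.sin β)) ^ 2)| := by
  have hπ := Real.pi_pos
  have hb0 : (0 : ℝ) < b := by linarith
  set A : ℝ := (Real.pi / b + Real.pi) / 3 with hAdef
  have hpb : Real.pi / b < Real.pi / 2 := by
    rw [div_lt_div_iff₀ hb0 (by norm_num)]
    nlinarith
  have hpbpos : 0 < Real.pi / b := div_pos hπ hb0
  have hA1 : Real.pi / b < A := by rw [hAdef]; linarith
  have hA2 : A < Real.pi / 2 := by rw [hAdef]; linarith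
  have hApos : 0 < A := lt_trans hpbpos hA1
  have hAlt : A < Real.pi := by linarith
  have hδpos : 0 < A - Real.sin A := sub_pos.mpr (Real.sin_lt hApos)
  have hsinA : 0 ≤ Real.sin A := Real.sin_nonneg_of_nonneg_of_le_pi hApos.le hAlt.le
  have hδle : A - Real.sin A ≤ Real.pi / 2 := by linarith
  have hsinδ : 0 < Real.sin (A - Real.sin A) :=
    Real.sin_pos_of_pos_of_lt_pi hδpos (by linarith)
  have hcosA : Real.cos A < 1 := by
    have := Real.cos_lt_cos_of_nonneg_of_le_pi le_rfl hAlt.le hApos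
    simpa using this
  refine ⟨(Real.pi / 2 - A) * (Real.sin (A - Real.sin A) * (1 - Real.cos A)),
    mul_pos (by linarith) (mul_pos hsinδ (by linarith)), ?_⟩
  intro h₂ hh₂
  set K : ℝ := Real.pi / 2 - Real.pi / b with hKdef
  have hK : 0 < K := by rw [hKdef]; linarith
  set M : ℝ := Real.cosh (h₂ / 2) + 1 with hMdef
  have hM : 0 < M := by positivity
  have hM1 : 1 ≤ M := by
    have := Real.one_le_cosh (h₂ / 2); rw [hMdef]; linarith
  set C : ℝ := Real.sin (A - Real.sin A) * (1 - Real.cos A) * Real.sinh (h₂ / 3) with hCdef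
  have hsinh3 : 0 < Real.sinh (h₂ / 3) := Real.sinh_pos_iff.mpr (by linarith)
  have hC : 0 < C := by
    rw [hCdef]; exact mul_pos (mul_pos hsinδ (by linarith)) hsinh3
  set f : ℝ → ℝ := fun β =>
      (1 - Real.cos β) * Real.sin (β - Real.sin β) *
        Real.sinh ((-h₂ / 2) / K * (β - Real.pi / b)) /
        ((Real.cosh ((-h₂ / 2) / K * (β - Real.pi / b))
          - Real.cos (β - Real.sin β)) ^ 2) with hfdef
  -- bounds on z₂ for β in the interval
  have hz2 : ∀ β ∈ Icc A (Real.pi / 2),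
      -(h₂ / 2) ≤ (-h₂ / 2) / K * (β - Real.pi / b) ∧
      (-h₂ / 2) / K * (β - Real.pi / b) ≤ -(h₂ / 3) := by
    intro β hβ
    obtain ⟨hβ1, hβ2⟩ := hβ
    have ht1 : (2 / 3 : ℝ) * K ≤ β - Real.pi / b := by
      have : A - Real.pi / b = (2 / 3) * K := by rw [hAdef, hKdef]; ring
      linarith
    have ht2 : β - Real.pi / b ≤ K := by rw [hKdef]; linarith
    have heq : (-h₂ / 2) / K * (β - Real.pi / b)
        = (-(h₂ / 2)) * ((β - Real.pi / b) / K) := by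
      ring
    constructor
    · rw [heq]
      have h1 : (β - Real.pi / b) / K ≤ 1 := by
        rw [div_le_one hK]; exact ht2
      nlinarith
    · rw [heq]
      have h1 : (2 / 3 : ℝ) ≤ (β - Real.pi / b) / K := by
        rw [le_div_iff₀ hK]; linarith
      nlinarith
  -- positivity of denominator base
  have hden : ∀ β ∈ Icc A (Real.pi / 2),
      0 < Real.cosh ((-h₂ / 2) / K * (β - Real.pi / b)) - Real.cos (β - Real.sin β) := by
    intro β hβ
    obtain ⟨h1, h2⟩ := hz2 β hβ
    have habs : h₂ / 3 ≤ |(-h₂ / 2) / K * (β - Real.pi / b)| := by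
      have := neg_le_abs ((-h₂ / 2) / K * (β - Real.pi / b))
      linarith
    have hcosh : Real.cosh (h₂ / 3) ≤ Real.cosh ((-h₂ / 2) / K * (β - Real.pi / b)) := by
      rw [Real.cosh_le_cosh]
      rwa [abs_of_pos (by linarith : (0:ℝ) < h₂ / 3)]
    have h1c : 1 < Real.cosh (h₂ / 3) := Real.one_lt_cosh.mpr (by positivity)
    have := Real.cos_le_one (β - Real.sin β)
    linarith
  -- pointwise bound
  have hpt : ∀ β ∈ Icc A (Real.pi / 2), f β ≤ -C / M ^ 2 := by
    intro β hβ
    obtain ⟨hβ1, hβ2⟩ := hβ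
    obtain ⟨hz1, hz2b⟩ := hz2 β ⟨hβ1, hβ2⟩
    set z₂ : ℝ := (-h₂ / 2) / K * (β - Real.pi / b)
    have hβpos : 0 < β := lt_of_lt_of_le hApos hβ1
    have hsinβ : 0 ≤ Real.sin β :=
      Real.sin_nonneg_of_nonneg_of_le_pi hβpos.le (by linarith)
    -- z₁ bounds
    have hz1lo : A - Real.sin A ≤ β - Real.sin β := stmt12_mono hβ1
    have hz1hi : β - Real.sin β ≤ Real.pi / 2 := by linarith
    have hsinz1 : Real.sin (A - Real.sin A) ≤ Real.sin (β - Real.sin β) := by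
      apply Real.strictMonoOn_sin.monotoneOn ⟨by linarith, hδle⟩ ⟨by linarith, hz1hi⟩ hz1lo
    have hcosβ : Real.cos β ≤ Real.cos A :=
      Real.cos_le_cos_of_nonneg_of_le_pi hApos.le (by linarith) hβ1
    have hsinhz2 : Real.sinh z₂ ≤ -Real.sinh (h₂ / 3) := by
      have := Real.sinh_le_sinh.mpr hz2b
      rwa [Real.sinh_neg] at this
    -- denominator bounds
    have hD : 0 < Real.cosh z₂ - Real.cos (β - Real.sin β) := hden β ⟨hβ1, hβ2⟩
    have hcoshz2 : Real.cosh z₂ ≤ Real.cosh (h₂ / 2) := by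
      rw [Real.cosh_le_cosh]
      rw [abs_of_pos (by linarith : (0:ℝ) < h₂ / 2), abs_le]
      constructor <;> linarith
    have hcos1 : -1 ≤ Real.cos (β - Real.sin β) := Real.neg_one_le_cos _
    have hDM : Real.cosh z₂ - Real.cos (β - Real.sin β) ≤ M := by
      rw [hMdef]; linarith
    have hD2 : 0 < (Real.cosh z₂ - Real.cos (β - Real.sin β)) ^ 2 := by positivity
    have hD2M : (Real.cosh z₂ - Real.cos (β - Real.sin β)) ^ 2 ≤ M ^ 2 := by
      apply pow_le_pow_left₀ hD.le hDM
    -- numerator bound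
    have hNum : (1 - Real.cos β) * Real.sin (β - Real.sin β) * Real.sinh z₂ ≤ -C := by
      rw [hCdef]
      have h1 : 0 < 1 - Real.cos β := by linarith
      have h2 : 0 < Real.sin (β - Real.sin β) := lt_of_lt_of_le hsinδ hsinz1
      have hPQ : Real.sin (A - Real.sin A) * (1 - Real.cos A) ≤
          (1 - Real.cos β) * Real.sin (β - Real.sin β) := by nlinarith
      have h3 := mul_le_mul_of_nonneg_left hsinhz2 (mul_pos h1 h2).le
      have h4 := mul_le_mul_of_nonneg_right hPQ hsinh3.le
      nlinarith [h3, h4]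
    have hfval : f β = (1 - Real.cos β) * Real.sin (β - Real.sin β) * Real.sinh z₂ /
        ((Real.cosh z₂ - Real.cos (β - Real.sin β)) ^ 2) := rfl
    rw [hfval, div_le_div_iff₀ hD2 (by positivity)]
    nlinarith
  -- continuity / integrability
  have hle : A ≤ Real.pi / 2 := hA2.le
  have hcont : ContinuousOn f (Icc A (Real.pi / 2)) := by
    apply ContinuousOn.div
    · apply Continuous.continuousOn; fun_prop
    · apply Continuous.continuousOn; fun_prop
    · intro x hx
      exact pow_ne_zero _ (ne_of_gt (hden x hx))
  have hint : IntervalIntegrable f MeasureTheory.volume A (Real.pi / 2) := by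
    apply ContinuousOn.intervalIntegrable
    rwa [Set.uIcc_of_le hle]
  have hintc : IntervalIntegrable (fun _ : ℝ => -C / M ^ 2) MeasureTheory.volume A
      (Real.pi / 2) := intervalIntegrable_const
  have hmono := intervalIntegral.integral_mono_on hle hint hintc hpt
  rw [intervalIntegral.integral_const, smul_eq_mul] at hmono
  have hIle : (∫ β in A..(Real.pi / 2), f β)
      ≤ -((Real.pi / 2 - A) * (Real.sin (A - Real.sin A) * (1 - Real.cos A))) *
        Real.sinh (h₂ / 3) / M ^ 2 := by
    refine le_trans hmono (le_of_eq ?_)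
    rw [hCdef]
    field_simp
  have hgoal1 : (∫ β in A..(Real.pi / 2), f β)
      ≤ -((Real.pi / 2 - A) * (Real.sin (A - Real.sin A) * (1 - Real.cos A))) *
        Real.sinh (h₂ / 3) / ((Real.cosh (h₂ / 2) + 1) ^ 2) := by
    rw [← hMdef]; exact hIle
  have hCb : 0 < (Real.pi / 2 - A) * (Real.sin (A - Real.sin A) * (1 - Real.cos A)) *
      Real.sinh (h₂ / 3) / ((Real.cosh (h₂ / 2) + 1) ^ 2) := by
    apply div_pos
    · exact mul_pos (mul_pos (by linarith) (mul_pos hsinδ (by linarith))) hsinh3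
    · rw [← hMdef]; positivity
  constructor
  · exact hgoal1
  · have h1 : (∫ β in A..(Real.pi / 2), f β)
        ≤ -((Real.pi / 2 - A) * (Real.sin (A - Real.sin A) * (1 - Real.cos A)) *
          Real.sinh (h₂ / 3) / ((Real.cosh (h₂ / 2) + 1) ^ 2)) := by
      refine le_trans hgoal1 (le_of_eq ?_); ring
    calc (Real.pi / 2 - A) * (Real.sin (A - Real.sin A) * (1 - Real.cos A)) *
          Real.sinh (h₂ / 3) / ((Real.cosh (h₂ / 2) + 1) ^ 2)
        ≤ -(∫ β in A..(Real.pi / 2), f β) := by linarith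
      _ ≤ |∫ β in A..(Real.pi / 2), f β| := neg_le_abs _
end
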